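/- (Proposition 1.) Let n, p ∈ ℕ, x₁,…,xₙ ∈ ℝᵖ, s₁,…,sₙ ≥ 0, m₁,…,mₙ ≥ 0, y₁,…,yₙ ∈ ℝ, uᵢ = yᵢ − mᵢ/2, and P : ℝᵖ → ℝ. Fix βₜ ∈ ℝᵖ and a positive semidefinite symmetric p×p matrix H, and define the surrogate Q̃(β) = Σᵢ sᵢ uᵢ xᵢᵀβ − (1/2) Σᵢ sᵢ ω(xᵢᵀβₜ, mᵢ)(xᵢᵀβ)² − (1/2)(β − βₜ)ᵀH(β − βₜ) − P(β). If β′ maximizes Q̃ over ℝᵖ and ρ′ ∈ ℝ maximizes ρ ↦ pℓ(ρ·β′) over ℝ, then pℓ(ρ′·β′) ≥ pℓ(βₜ). That is, each iterate of the generalized PX-ECME (GPX-ECME) algorithm increases the penalized weighted log-likelihood. -/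

import Mathlib

/-!
A minorize–maximize argument. Writing `t = xᵢᵀβ`, one observation contributes
`m t / 2 - m log (1 + eᵗ) = -m log 2 - m log cosh (t / 2)` to `pℓ`, and since `v ↦ log cosh (√v / 2)`
is concave with slope `ω(t₀, 1) / 2` at `v = t₀²`, the gap between this term and its quadratic
surrogate in `Q̃` is smallest at `t = t₀`. The penalty cancels and the `H`-term is nonnegative and
vanishes at `βₜ`, so `pℓ - Q̃` is minimal at `βₜ`. Hence `pℓ(β') - pℓ(βₜ) ≥ Q̃(β') - Q̃(βₜ) ≥ 0`,
and the scaling step can only increase `pℓ` further, `ρ = 1` being a candidate.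
-/

open Matrix

/-- The Pólya-Gamma EM weight function: ω(t,m) = (m/(2t))·tanh(t/2) for t ≠ 0,
and ω(0,m) = m/4. -/
noncomputable def omegaPG (t m : ℝ) : ℝ :=
  if t = 0 then m / 4 else m / (2 * t) * Real.tanh (t / 2)

/-- The penalized weighted observed log-likelihood
pℓ(β) = Σᵢ sᵢ[yᵢ xᵢᵀβ − mᵢ log(1 + exp(xᵢᵀβ))] − P(β). -/
noncomputable def pLogLik (n p : ℕ) (x : Fin n → Fin p → ℝ) (s m y : Fin n → ℝ)
    (P : (Fin p → ℝ) → ℝ) (β : Fin p → ℝ) : ℝ :=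
  (∑ i, s i * (y i * (x i ⬝ᵥ β) - m i * Real.log (1 + Real.exp (x i ⬝ᵥ β)))) - P β

/-- The surrogate parameter-expanded Q-function of the GPX-ECME algorithm:
Q̃(β) = Σᵢ sᵢ uᵢ xᵢᵀβ − (1/2) Σᵢ sᵢ ω(xᵢᵀβₜ, mᵢ)(xᵢᵀβ)²
        − (1/2)(β − βₜ)ᵀH(β − βₜ) − P(β). -/
noncomputable def QtildeFun (n p : ℕ) (x : Fin n → Fin p → ℝ) (s m y : Fin n → ℝ)
    (P : (Fin p → ℝ) → ℝ) (H : Matrix (Fin p) (Fin p) ℝ) (βt : Fin p → ℝ)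
    (β : Fin p → ℝ) : ℝ :=
  (∑ i, s i * (y i - m i / 2) * (x i ⬝ᵥ β))
    - (1 / 2) * (∑ i, s i * omegaPG (x i ⬝ᵥ βt) (m i) * (x i ⬝ᵥ β) ^ 2)
    - (1 / 2) * ((β - βt) ⬝ᵥ (H *ᵥ (β - βt))) - P β

open Real

namespace Real

theorem hasDerivAt_tanh (x : ℝ) : HasDerivAt tanh (1 / cosh x ^ 2) x := by
  have h := (hasDerivAt_sinh x).div (hasDerivAt_cosh x) (cosh_pos x).ne'
  rw [show sinh / cosh = tanh from funext fun y => (tanh_eq_sinh_div_cosh y).symm] at h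
  refine h.congr_deriv ?_
  field_simp
  linarith [cosh_sq_sub_sinh_sq x]

theorem self_le_sinh_mul_cosh {x : ℝ} (hx : 0 ≤ x) : x ≤ sinh x * cosh x := by
  have h := self_le_sinh_iff.mpr (by linarith : (0 : ℝ) ≤ 2 * x)
  rw [sinh_two_mul] at h
  linarith

theorem mul_tanh_le_mul_tanh {a b : ℝ} (hb : 0 ≤ b) (hab : b ≤ a) :
    b * tanh a ≤ a * tanh b := by
  let g : ℝ → ℝ := fun u => u * tanh b - b * tanh u
  have hg : ∀ u, HasDerivAt g (tanh b - b * (1 / cosh u ^ 2)) u := fun u =>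
    (((hasDerivAt_id' u).mul_const (tanh b)).sub ((hasDerivAt_tanh u).const_mul b)).congr_deriv
      (by ring)
  have hg_nonneg : ∀ u ∈ interior (Set.Ici b), 0 ≤ tanh b - b * (1 / cosh u ^ 2) := by
    intro u hu
    rw [interior_Ici] at hu
    have hcosh : cosh b ^ 2 ≤ cosh u ^ 2 := by
      gcongr
      rw [cosh_le_cosh, abs_of_nonneg hb, abs_of_nonneg (hb.trans hu.le)]
      exact hu.le
    have hslope : b / cosh b ^ 2 ≤ tanh b := by
      rw [tanh_eq_sinh_div_cosh, div_le_div_iff₀ (by positivity) (cosh_pos b)]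
      nlinarith [self_le_sinh_mul_cosh hb, cosh_pos b]
    have hdecay : b / cosh u ^ 2 ≤ b / cosh b ^ 2 :=
      div_le_div_of_nonneg_left hb (by positivity) hcosh
    rw [mul_one_div]
    linarith
  have hgc : Continuous g := continuous_iff_continuousAt.2 fun u => (hg u).continuousAt
  have hmono : g b ≤ g a :=
    monotoneOn_of_hasDerivWithinAt_nonneg (convex_Ici b) hgc.continuousOn
      (fun u _ => (hg u).hasDerivWithinAt) hg_nonneg Set.self_mem_Ici hab hab
  simp only [g] at hmono
  linarith

theorem log_cosh_le_sq_div_two (a : ℝ) : log (cosh a) ≤ a ^ 2 / 2 :=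
  (log_le_iff_le_exp (cosh_pos a)).mpr (cosh_le_exp_half_sq a)

theorem hasDerivAt_log_cosh (x : ℝ) : HasDerivAt (fun u => log (cosh u)) (tanh x) x := by
  simpa [← tanh_eq_sinh_div_cosh] using (hasDerivAt_cosh x).log (cosh_pos x).ne'

/-- The quadratic `tanh b / (2 b) * u ^ 2` minus `log (cosh u)` is minimal on `[0, ∞)` at `u = b`:
its derivative `(u tanh b - b tanh u) / b` changes sign there. -/
theorem log_cosh_le_of_pos {a b : ℝ} (ha : 0 ≤ a) (hb : 0 < b) :
    log (cosh a) ≤ log (cosh b) + tanh b / (2 * b) * (a ^ 2 - b ^ 2) := by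
  let G : ℝ → ℝ := fun u => tanh b / (2 * b) * u ^ 2 - log (cosh u)
  have hG : ∀ u, HasDerivAt G (tanh b / b * u - tanh u) u := fun u =>
    ((((hasDerivAt_pow 2 u).const_mul (tanh b / (2 * b))).sub (hasDerivAt_log_cosh u))).congr_deriv
      (by field_simp; ring)
  have hGc : Continuous G := continuous_iff_continuousAt.2 fun u => (hG u).continuousAt
  suffices G b ≤ G a by simp only [G] at this; linarith
  rcases le_total b a with hba | hab
  · refine monotoneOn_of_hasDerivWithinAt_nonneg (convex_Ici b) hGc.continuousOn
      (fun u _ => (hG u).hasDerivWithinAt) (fun u hu => ?_) Set.self_mem_Ici hba hba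
    rw [interior_Ici] at hu
    have := mul_tanh_le_mul_tanh hb.le hu.le
    rw [sub_nonneg, div_mul_eq_mul_div, le_div_iff₀ hb]
    linarith
  · refine antitoneOn_of_hasDerivWithinAt_nonpos (convex_Icc 0 b) hGc.continuousOn
      (fun u _ => (hG u).hasDerivWithinAt) (fun u hu => ?_) ⟨ha, hab⟩ ⟨hb.le, le_rfl⟩ hab
    rw [interior_Icc] at hu
    have := mul_tanh_le_mul_tanh hu.1.le hu.2.le
    rw [sub_nonpos, div_mul_eq_mul_div, div_le_iff₀ hb]
    linarith

theorem log_cosh_le_of_ne_zero {b : ℝ} (hb : b ≠ 0) (a : ℝ) :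
    log (cosh a) ≤ log (cosh b) + tanh b / (2 * b) * (a ^ 2 - b ^ 2) := by
  have hslope : tanh |b| / (2 * |b|) = tanh b / (2 * b) := by
    rcases abs_choice b with h | h <;> rw [h]
    rw [tanh_neg, mul_neg, neg_div_neg_eq]
  simpa only [cosh_abs, sq_abs, hslope] using log_cosh_le_of_pos (abs_nonneg a) (abs_pos.2 hb)

theorem log_one_add_exp (t : ℝ) : log (1 + exp t) = t / 2 + log 2 + log (cosh (t / 2)) := by
  have h : 1 + exp t = exp (t / 2) * (2 * cosh (t / 2)) := by
    rw [cosh_eq, mul_div_cancel₀ _ two_ne_zero, mul_add, ← exp_add, ← exp_add]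
    ring_nf
    simp [add_comm]
  rw [h, log_mul (exp_pos _).ne' (by positivity), log_mul two_ne_zero (cosh_pos _).ne', log_exp]
  ring

end Real

theorem mul_log_cosh_half_le_add_omegaPG {m : ℝ} (hm : 0 ≤ m) (t t0 : ℝ) :
    m * log (cosh (t / 2)) ≤ m * log (cosh (t0 / 2)) + omegaPG t0 m / 2 * (t ^ 2 - t0 ^ 2) := by
  unfold omegaPG
  split_ifs with ht0
  · have := mul_le_mul_of_nonneg_left (log_cosh_le_sq_div_two (t / 2)) hm
    simp only [ht0, zero_div, cosh_zero, log_one]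
    linarith
  · have := mul_le_mul_of_nonneg_left
      (log_cosh_le_of_ne_zero (div_ne_zero ht0 two_ne_zero) (t / 2)) hm
    have hslope : m * (tanh (t0 / 2) / (2 * (t0 / 2)) * ((t / 2) ^ 2 - (t0 / 2) ^ 2)) =
        m / (2 * t0) * tanh (t0 / 2) / 2 * (t ^ 2 - t0 ^ 2) := by
      field_simp
    linarith

/-- One observation's term of `pLogLik` minus its term of `QtildeFun`, at linear predictor `t`
when the current one is `t0`. -/
noncomputable def surrogateGap (t0 m t : ℝ) : ℝ :=
  m / 2 * t - m * log (1 + exp t) + omegaPG t0 m / 2 * t ^ 2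

theorem surrogateGap_self_le {m : ℝ} (hm : 0 ≤ m) (t0 t : ℝ) :
    surrogateGap t0 m t0 ≤ surrogateGap t0 m t := by
  have := mul_log_cosh_half_le_add_omegaPG hm t t0
  simp only [surrogateGap, log_one_add_exp]
  linarith

section Minorization

variable {n p : ℕ} (x : Fin n → Fin p → ℝ) (s m y : Fin n → ℝ) (P : (Fin p → ℝ) → ℝ)
  (H : Matrix (Fin p) (Fin p) ℝ) (βt : Fin p → ℝ)

theorem pLogLik_sub_QtildeFun (β : Fin p → ℝ) :
    pLogLik n p x s m y P β - QtildeFun n p x s m y P H βt β =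
      ∑ i, s i * surrogateGap (x i ⬝ᵥ βt) (m i) (x i ⬝ᵥ β) +
        1 / 2 * ((β - βt) ⬝ᵥ (H *ᵥ (β - βt))) := by
  have hsum : ∑ i, s i * surrogateGap (x i ⬝ᵥ βt) (m i) (x i ⬝ᵥ β) =
      ∑ i, s i * (y i * (x i ⬝ᵥ β) - m i * log (1 + exp (x i ⬝ᵥ β))) -
        ∑ i, s i * (y i - m i / 2) * (x i ⬝ᵥ β) +
        1 / 2 * ∑ i, s i * omegaPG (x i ⬝ᵥ βt) (m i) * (x i ⬝ᵥ β) ^ 2 := by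
    rw [Finset.mul_sum, ← Finset.sum_sub_distrib, ← Finset.sum_add_distrib]
    exact Finset.sum_congr rfl fun i _ => by unfold surrogateGap; ring
  rw [hsum, pLogLik, QtildeFun]
  ring

variable {s m}

theorem pLogLik_sub_QtildeFun_self_le (hs : ∀ i, 0 ≤ s i) (hm : ∀ i, 0 ≤ m i)
    (hH : ∀ z : Fin p → ℝ, 0 ≤ z ⬝ᵥ (H *ᵥ z)) (β : Fin p → ℝ) :
    pLogLik n p x s m y P βt - QtildeFun n p x s m y P H βt βt ≤
      pLogLik n p x s m y P β - QtildeFun n p x s m y P H βt β := by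
  rw [pLogLik_sub_QtildeFun, pLogLik_sub_QtildeFun, sub_self, zero_dotProduct, mul_zero, add_zero]
  have hquad := hH (β - βt)
  have hsum := Finset.sum_le_sum fun i (_ : i ∈ Finset.univ) =>
    mul_le_mul_of_nonneg_left (surrogateGap_self_le (hm i) (x i ⬝ᵥ βt) (x i ⬝ᵥ β)) (hs i)
  linarith

end Minorization

theorem gpxecme_update_increases_penalized_loglik_general (n p : ℕ) (x : Fin n → Fin p → ℝ)
    (s m y : Fin n → ℝ) (hs : ∀ i, 0 ≤ s i) (hm : ∀ i, 0 ≤ m i)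
    (P : (Fin p → ℝ) → ℝ) (βt : Fin p → ℝ) (H : Matrix (Fin p) (Fin p) ℝ)
    (hHpsd : ∀ z : Fin p → ℝ, 0 ≤ z ⬝ᵥ (H *ᵥ z))
    (β' : Fin p → ℝ) (ρ' : ℝ)
    (hmax : ∀ β : Fin p → ℝ,
      QtildeFun n p x s m y P H βt β ≤ QtildeFun n p x s m y P H βt β')
    (hρ : ∀ ρ : ℝ, pLogLik n p x s m y P (ρ • β') ≤ pLogLik n p x s m y P (ρ' • β')) :
    pLogLik n p x s m y P (ρ' • β') ≥ pLogLik n p x s m y P βt := by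
  have hgap := pLogLik_sub_QtildeFun_self_le x y P H βt hs hm hHpsd β'
  calc pLogLik n p x s m y P βt ≤ pLogLik n p x s m y P β' := by linarith [hmax βt]
    _ = pLogLik n p x s m y P ((1 : ℝ) • β') := by rw [one_smul]
    _ ≤ pLogLik n p x s m y P (ρ' • β') := hρ 1

/-- Proposition 1: each iterate of the generalized PX-ECME (GPX-ECME) algorithm
increases the penalized weighted log-likelihood. -/
theorem gpxecme_update_increases_penalized_loglik (n p : ℕ) (x : Fin n → Fin p → ℝ)
    (s m y : Fin n → ℝ) (hs : ∀ i, 0 ≤ s i) (hm : ∀ i, 0 ≤ m i)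
    (P : (Fin p → ℝ) → ℝ) (βt : Fin p → ℝ) (H : Matrix (Fin p) (Fin p) ℝ)
    (hHsymm : H.IsSymm) (hHpsd : ∀ z : Fin p → ℝ, 0 ≤ z ⬝ᵥ (H *ᵥ z))
    (β' : Fin p → ℝ) (ρ' : ℝ)
    (hmax : ∀ β : Fin p → ℝ,
      QtildeFun n p x s m y P H βt β ≤ QtildeFun n p x s m y P H βt β')
    (hρ : ∀ ρ : ℝ, pLogLik n p x s m y P (ρ • β') ≤ pLogLik n p x s m y P (ρ' • β')) :
    pLogLik n p x s m y P (ρ' • β') ≥ pLogLik n p x s m y P βt :=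
  gpxecme_update_increases_penalized_loglik_general n p x s m y hs hm P βt H hHpsd β' ρ' hmax hρ
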